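/- Let d = 2 and let x ∈ ℝ² satisfy ε < |x| < 2. Set y = F_ε(x), r' = |y| (so 1 < r' < 2), let J = DF_ε(x) be the 2×2 Jacobian matrix of F_ε at x, and let M = J·Jᵀ / det(J). Then, with A₁₁(r') = (r'-1)/r' + ε/(r'(2-ε)), one has M·y = A₁₁(r')·y and M·y⊥ = (1/A₁₁(r'))·y⊥, where y⊥ = (-y₂, y₁); that is, the push-forward conductivity F_ε*Id has radial eigenvalue A₁₁(r') and azimuthal eigenvalue 1/A₁₁(r'). -/

import Mathlib

/-!
On the annulus `ε < |x| < 2`, `F_ε` is the radial map `x ↦ f(|x|) x/|x|` with the affine profile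
`f(r) = (2 - 2ε + r)/(2 - ε)`. The Jacobian of a radial map is symmetric, with eigenvalue `f'(r)`
along `x` and `f(r)/r` orthogonally to `x`. Hence, in dimension 2, `J Jᵀ / det J = J² / det J` has
eigenvalue `f'(r) / (f(r)/r)` along `x` and its inverse orthogonally to `x`; since `y = F_ε(x)` is
parallel to `x`, these are the eigenvalues on `y` and `y⊥`. Substituting `r = (2 - ε) r' - 2 + 2ε`
for `r' = f(r)` turns `r f'(r) / f(r)` into `A₁₁(r')`.
-/

/-- The Kohn regularised cloaking map `F_ε : ℝ² → ℝ²`. -/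
noncomputable def kohnMap2 (ε : ℝ) (x : EuclideanSpace ℝ (Fin 2)) :
    EuclideanSpace ℝ (Fin 2) :=
  if 2 ≤ ‖x‖ then x
  else if ε ≤ ‖x‖ then ((2 - 2 * ε) / (2 - ε) + ‖x‖ / (2 - ε)) • (‖x‖⁻¹ • x)
  else ε⁻¹ • x

open RealInnerProductSpace Module Set

section

variable {E : Type*} [NormedAddCommGroup E] [InnerProductSpace ℝ E] {μ ν : ℝ} {x : E}

noncomputable def radialTangentialScaling (μ ν : ℝ) (x : E) : E →L[ℝ] E :=
  ν • ContinuousLinearMap.id ℝ E + ((μ - ν) / ‖x‖ ^ 2) • (innerSL ℝ x).smulRight x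

theorem radialTangentialScaling_apply (v : E) :
    radialTangentialScaling μ ν x v = ν • v + ((μ - ν) / ‖x‖ ^ 2 * ⟪x, v⟫) • x := by
  simp [radialTangentialScaling, smul_smul]

theorem radialTangentialScaling_apply_self (hx : x ≠ 0) :
    radialTangentialScaling μ ν x x = μ • x := by
  have : ‖x‖ ≠ 0 := norm_ne_zero_iff.2 hx
  rw [radialTangentialScaling_apply, real_inner_self_eq_norm_sq]
  match_scalars
  field_simp
  ring

theorem radialTangentialScaling_apply_of_inner_eq_zero {v : E} (hv : ⟪x, v⟫ = 0) :
    radialTangentialScaling μ ν x v = ν • v := by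
  simp [radialTangentialScaling_apply, hv]

theorem radialTangentialScaling_smul {c : ℝ} (hc : c ≠ 0) :
    radialTangentialScaling μ ν (c • x) = radialTangentialScaling μ ν x := by
  ext v
  by_cases hx : x = 0
  · simp [hx]
  have : ‖x‖ ≠ 0 := norm_ne_zero_iff.2 hx
  simp only [radialTangentialScaling_apply, norm_smul, Real.norm_eq_abs, mul_pow, sq_abs,
    real_inner_smul_left, smul_smul]
  field_simp

theorem isSymmetric_radialTangentialScaling :
    (radialTangentialScaling μ ν x : E →ₗ[ℝ] E).IsSymmetric := fun u v => by
  simp only [ContinuousLinearMap.coe_coe, radialTangentialScaling_apply, inner_add_left,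
    inner_add_right, real_inner_smul_left, real_inner_smul_right, real_inner_comm x u]
  ring

-- In an orthonormal basis this is `ν (1 + w u uᵀ)`, so the matrix determinant lemma applies.
theorem det_radialTangentialScaling [FiniteDimensional ℝ E] (hx : x ≠ 0) (hν : ν ≠ 0) :
    LinearMap.det (radialTangentialScaling μ ν x : E →ₗ[ℝ] E) = μ * ν ^ (finrank ℝ E - 1) := by
  let b := stdOrthonormalBasis ℝ E
  let u : Fin (finrank ℝ E) → ℝ := fun i => ⟪b i, x⟫
  have hx' : ‖x‖ ≠ 0 := norm_ne_zero_iff.2 hx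
  have hnorm : u ⬝ᵥ u = ‖x‖ ^ 2 := by
    rw [← real_inner_self_eq_norm_sq, ← b.sum_inner_mul_inner x x]
    simp only [dotProduct, u, real_inner_comm x]
  obtain ⟨n, hn⟩ : ∃ n, finrank ℝ E = n + 1 :=
    Nat.exists_eq_add_one.2 (finrank_pos_iff_exists_ne_zero.2 ⟨x, hx⟩)
  have hmat : LinearMap.toMatrix b.toBasis b.toBasis (radialTangentialScaling μ ν x)
      = ν • (1 + Matrix.replicateCol Unit (((μ - ν) / (ν * ‖x‖ ^ 2)) • u) *
          Matrix.replicateRow Unit u) := by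
    ext i j
    rw [LinearMap.toMatrix_apply, OrthonormalBasis.coe_toBasis_repr_apply,
      OrthonormalBasis.repr_apply_apply, OrthonormalBasis.coe_toBasis]
    simp only [ContinuousLinearMap.coe_coe, radialTangentialScaling_apply, inner_add_right,
      real_inner_smul_right, b.inner_eq_ite, Matrix.smul_apply, Matrix.add_apply, Matrix.one_apply,
      ← Matrix.vecMulVec_eq, Matrix.vecMulVec_apply, Pi.smul_apply, real_inner_comm x, smul_eq_mul, u]
    split_ifs <;> field_simp
  rw [← LinearMap.det_toMatrix b.toBasis, hmat, Matrix.det_smul,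
    Matrix.det_one_add_replicateCol_mul_replicateRow, dotProduct_smul, hnorm, Fintype.card_fin, hn,
    add_tsub_cancel_right, smul_eq_mul]
  field_simp
  ring

theorem LinearMap.IsSymmetric.det_inv_smul_comp_adjoint_apply_of_eq_smul [FiniteDimensional ℝ E]
    {T : E →ₗ[ℝ] E} (hT : T.IsSymmetric) {v : E} {c : ℝ} (hv : T v = c • v) :
    ((LinearMap.det T)⁻¹ • (T ∘ₗ LinearMap.adjoint T)) v = ((LinearMap.det T)⁻¹ * c ^ 2) • v := by
  rw [hT.adjoint_eq, LinearMap.smul_apply, LinearMap.comp_apply, hv, map_smul, hv, smul_smul,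
    smul_smul, sq, mul_assoc]

theorem hasFDerivAt_norm (hx : x ≠ 0) :
    HasFDerivAt (fun z : E => ‖z‖) (‖x‖⁻¹ • innerSL ℝ x) x := by
  have hx' : ‖x‖ ^ 2 ≠ 0 := pow_ne_zero 2 (norm_ne_zero_iff.2 hx)
  convert (hasStrictFDerivAt_norm_sq x).hasFDerivAt.sqrt hx' using 1
  · simp [Real.sqrt_sq (norm_nonneg _)]
  · ext v
    simp only [smul_apply, coe_innerSL_apply, smul_eq_mul,
      Real.sqrt_sq (norm_nonneg _), nsmul_eq_mul, Nat.cast_ofNat]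
    field_simp

theorem hasFDerivAt_radialMap {f : ℝ → ℝ} {f' : ℝ} (hx : x ≠ 0) (hf : HasDerivAt f f' ‖x‖) :
    HasFDerivAt (fun z : E => f ‖z‖ • (‖z‖⁻¹ • z))
      (radialTangentialScaling f' (f ‖x‖ / ‖x‖) x) x := by
  have hx' : ‖x‖ ≠ 0 := norm_ne_zero_iff.2 hx
  have hn := hasFDerivAt_norm hx
  have hg := (hf.comp_hasFDerivAt x hn).mul ((hasDerivAt_inv hx').comp_hasFDerivAt x hn)
  convert hg.smul (hasFDerivAt_id x) using 1
  · ext1 z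
    simp [smul_smul]
  · ext v
    simp only [radialTangentialScaling_apply, Pi.mul_apply, Function.comp_apply, neg_smul,
      smul_neg, id_eq, add_apply, smul_apply, neg_apply, ContinuousLinearMap.id_apply,
      ContinuousLinearMap.smulRight_apply, coe_innerSL_apply, smul_eq_mul]
    match_scalars
    · field_simp
    · field_simp
      ring

end

theorem EuclideanSpace.inner_self_rotation_eq_zero (v : EuclideanSpace ℝ (Fin 2)) :
    ⟪v, (EuclideanSpace.equiv (Fin 2) ℝ).symm ![-(v 1), v 0]⟫ = 0 := by
  simp only [PiLp.continuousLinearEquiv_symm_apply, PiLp.inner_apply, RCLike.inner_apply,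
    Real.ringHom_apply, Fin.sum_univ_two, Matrix.cons_val_zero, Matrix.cons_val_one,
    Matrix.cons_val_fin_one]
  ring

noncomputable def kohnRadius (ε r : ℝ) : ℝ := (2 - 2 * ε) / (2 - ε) + r / (2 - ε)

section Kohn

variable {ε r : ℝ}

theorem hasDerivAt_kohnRadius (ε r : ℝ) : HasDerivAt (kohnRadius ε) (2 - ε)⁻¹ r :=
  (((hasDerivAt_id' r).div_const (2 - ε)).const_add ((2 - 2 * ε) / (2 - ε))).congr_deriv
    (one_div _)

theorem kohnRadius_mem_Ioo (hr : r ∈ Ioo ε 2) : kohnRadius ε r ∈ Ioo 1 2 := by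
  have : 0 < 2 - ε := by linarith [hr.1, hr.2]
  rw [kohnRadius, ← add_div, mem_Ioo, lt_div_iff₀ this, div_lt_iff₀ this]
  constructor <;> linarith [hr.1, hr.2]

theorem kohnRadius_A11_eq (hε : 0 ≤ ε) (hr : r ∈ Ioo ε 2) :
    (kohnRadius ε r - 1) / kohnRadius ε r + ε / (kohnRadius ε r * (2 - ε))
      = (2 - ε)⁻¹ / (kohnRadius ε r / r) := by
  have h0 : 0 < kohnRadius ε r := one_pos.trans (kohnRadius_mem_Ioo hr).1
  have h1 : 2 - ε ≠ 0 := by linarith [hr.1, hr.2]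
  have h2 : r ≠ 0 := by linarith [hr.1]
  rw [kohnRadius] at h0 ⊢
  field_simp
  ring

theorem kohnMap2_of_mem_annulus {z : EuclideanSpace ℝ (Fin 2)} (h1 : ε ≤ ‖z‖) (h2 : ‖z‖ < 2) :
    kohnMap2 ε z = kohnRadius ε ‖z‖ • (‖z‖⁻¹ • z) := by
  rw [kohnMap2, if_neg h2.not_ge, if_pos h1, kohnRadius]

variable {x : EuclideanSpace ℝ (Fin 2)}

theorem norm_kohnMap2 (hε : 0 ≤ ε) (h1 : ε < ‖x‖) (h2 : ‖x‖ < 2) :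
    ‖kohnMap2 ε x‖ = kohnRadius ε ‖x‖ := by
  have hx : ‖x‖ ≠ 0 := (hε.trans_lt h1).ne'
  have hρ : 0 ≤ kohnRadius ε ‖x‖ := zero_le_one.trans (kohnRadius_mem_Ioo ⟨h1, h2⟩).1.le
  rw [kohnMap2_of_mem_annulus h1.le h2, norm_smul, norm_smul, norm_inv, norm_norm,
    inv_mul_cancel₀ hx, mul_one, Real.norm_of_nonneg hρ]

theorem hasFDerivAt_kohnMap2 (hε : 0 ≤ ε) (h1 : ε < ‖x‖) (h2 : ‖x‖ < 2) :
    HasFDerivAt (kohnMap2 ε)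
      (radialTangentialScaling (2 - ε)⁻¹ (kohnRadius ε ‖x‖ / ‖x‖) x) x := by
  have hx : x ≠ 0 := norm_pos_iff.1 (hε.trans_lt h1)
  refine (hasFDerivAt_radialMap hx (hasDerivAt_kohnRadius ε ‖x‖)).congr_of_eventuallyEq ?_
  filter_upwards [(continuous_norm.tendsto x).eventually (Ioo_mem_nhds h1 h2)] with z hz
  exact kohnMap2_of_mem_annulus hz.1.le hz.2

end Kohn

theorem kohnMap2_pushforward_eigen_general (ε : ℝ) (hε0 : 0 < ε)
    (x : EuclideanSpace ℝ (Fin 2)) (hx1 : ε < ‖x‖) (hx2 : ‖x‖ < 2)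
    (y : EuclideanSpace ℝ (Fin 2)) (hy : y = kohnMap2 ε x)
    (r' : ℝ) (hr' : r' = ‖y‖)
    (J : EuclideanSpace ℝ (Fin 2) →ₗ[ℝ] EuclideanSpace ℝ (Fin 2))
    (hJ : J = (fderiv ℝ (kohnMap2 ε) x : EuclideanSpace ℝ (Fin 2) →ₗ[ℝ] EuclideanSpace ℝ (Fin 2)))
    (M : EuclideanSpace ℝ (Fin 2) →ₗ[ℝ] EuclideanSpace ℝ (Fin 2))
    (hM : M = (LinearMap.det J)⁻¹ • (J ∘ₗ LinearMap.adjoint J))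
    (A11 : ℝ) (hA11 : A11 = (r' - 1) / r' + ε / (r' * (2 - ε)))
    (yperp : EuclideanSpace ℝ (Fin 2))
    (hyperp : yperp = (EuclideanSpace.equiv (Fin 2) ℝ).symm ![-(y 1), y 0]) :
    1 < r' ∧ r' < 2 ∧ M y = A11 • y ∧ M yperp = A11⁻¹ • yperp := by
  set ρ := kohnRadius ε ‖x‖
  have hρ : ρ ∈ Ioo 1 2 := kohnRadius_mem_Ioo ⟨hx1, hx2⟩
  have hρ0 : 0 < ρ := one_pos.trans hρ.1
  have hr'ρ : r' = ρ := by rw [hr', hy, norm_kohnMap2 hε0.le hx1 hx2]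
  have hy0 : y ≠ 0 := norm_pos_iff.1 (hr' ▸ hr'ρ ▸ hρ0)
  have hr0 : 0 < ‖x‖ := hε0.trans hx1
  have hρr : ρ / ‖x‖ ≠ 0 := (div_pos hρ0 hr0).ne'
  have hJrad : J = radialTangentialScaling (2 - ε)⁻¹ (ρ / ‖x‖) y := by
    rw [hJ, (hasFDerivAt_kohnMap2 hε0.le hx1 hx2).fderiv, hy, kohnMap2_of_mem_annulus hx1.le hx2,
      smul_smul, radialTangentialScaling_smul (mul_pos hρ0 (inv_pos.2 hr0)).ne']
  have hsymm : J.IsSymmetric := hJrad ▸ isSymmetric_radialTangentialScaling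
  have hdet : LinearMap.det J = (2 - ε)⁻¹ * (ρ / ‖x‖) := by
    rw [hJrad, det_radialTangentialScaling hy0 hρr, finrank_euclideanSpace_fin, pow_one]
  have hA : A11 = (2 - ε)⁻¹ / (ρ / ‖x‖) := by
    rw [hA11, hr'ρ, kohnRadius_A11_eq hε0.le ⟨hx1, hx2⟩]
  have h2ε : (2 - ε)⁻¹ ≠ 0 := inv_ne_zero (by linarith)
  refine ⟨hr'ρ ▸ hρ.1, hr'ρ ▸ hρ.2, ?_, ?_⟩
  · have hJy : J y = (2 - ε)⁻¹ • y := by rw [hJrad]; exact radialTangentialScaling_apply_self hy0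
    rw [hM, hsymm.det_inv_smul_comp_adjoint_apply_of_eq_smul hJy, hdet, hA]
    field_simp
  · have hJyperp : J yperp = (ρ / ‖x‖) • yperp := by
      rw [hJrad, hyperp]
      exact radialTangentialScaling_apply_of_inner_eq_zero
        (EuclideanSpace.inner_self_rotation_eq_zero y)
    rw [hM, hsymm.det_inv_smul_comp_adjoint_apply_of_eq_smul hJyperp, hdet, hA]
    field_simp

/-- In dimension 2, the push-forward conductivity `M = J Jᵀ / det J` (with `J = DF_ε(x)`,
`y = F_ε(x)`, `r' = |y|`) has radial eigenvalue `A₁₁(r') = (r'-1)/r' + ε/(r'(2-ε))`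
and azimuthal eigenvalue `1/A₁₁(r')`: `M y = A₁₁(r') y` and `M y⊥ = A₁₁(r')⁻¹ y⊥`,
where `y⊥ = (-y₂, y₁)`. Moreover `1 < r' < 2`. -/
theorem kohnMap2_pushforward_eigen (ε : ℝ) (hε0 : 0 < ε) (hε1 : ε < 1)
    (x : EuclideanSpace ℝ (Fin 2)) (hx1 : ε < ‖x‖) (hx2 : ‖x‖ < 2)
    (y : EuclideanSpace ℝ (Fin 2)) (hy : y = kohnMap2 ε x)
    (r' : ℝ) (hr' : r' = ‖y‖)
    (J : EuclideanSpace ℝ (Fin 2) →ₗ[ℝ] EuclideanSpace ℝ (Fin 2))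
    (hJ : J = (fderiv ℝ (kohnMap2 ε) x : EuclideanSpace ℝ (Fin 2) →ₗ[ℝ] EuclideanSpace ℝ (Fin 2)))
    (M : EuclideanSpace ℝ (Fin 2) →ₗ[ℝ] EuclideanSpace ℝ (Fin 2))
    (hM : M = (LinearMap.det J)⁻¹ • (J ∘ₗ LinearMap.adjoint J))
    (A11 : ℝ) (hA11 : A11 = (r' - 1) / r' + ε / (r' * (2 - ε)))
    (yperp : EuclideanSpace ℝ (Fin 2))
    (hyperp : yperp = (EuclideanSpace.equiv (Fin 2) ℝ).symm ![-(y 1), y 0]) :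
    1 < r' ∧ r' < 2 ∧ M y = A11 • y ∧ M yperp = A11⁻¹ • yperp :=
  kohnMap2_pushforward_eigen_general ε hε0 x hx1 hx2 y hy r' hr' J hJ M hM A11 hA11 yperp hyperp
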